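/- arXiv:1304.3884 — 2 statements merged into one kernel-verified Lean document; each statement's English description precedes it below -/
import Mathlib

section
/- Define s : S₃ → (ℤ/4ℤ)³ (indexing triples by {0,1,2}) by s(id) = (0,0,0), s((0 1 2)) = (3,3,2), s((0 2 1)) = (2,1,1), s((0 1)) = (3,1,0), s((0 2)) = (2,0,2), s((1 2)) = (0,3,1). Then s is a 1-cocycle for the right permutation action of S₃ on (ℤ/4ℤ)³: for all η, θ ∈ S₃ and all i ∈ {0,1,2}, s(η∘θ)(i) = s(η)(θ(i)) + s(θ)(i). Equivalently, the map Ψ(η) = (η, s(η)) is a group homomorphism from S₃ into the semidirect product S₃ ⋉ (ℤ/4ℤ)³ whose multiplication is (η,g)·(θ,h) = (η∘θ, g·θ + h) with (g·θ)(i) = g(θ(i)). -/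
/-!
With `g i := -(i : ℤ/4ℤ)`, the prescribed map is `s η i = g (η i) - g i`, i.e. `s` is the
coboundary of `g` (in the paper's units, `s(η)(i) = (i - η(i))/2`), and coboundaries are cocycles.
-/

open Equiv

def permCoboundary {α M : Type*} [AddGroup M] (g : α → M) (π : Perm α) : α → M :=
  fun i => g (π i) - g i

theorem permCoboundary_mul {α M : Type*} [AddGroup M] (g : α → M) (η θ : Perm α) (i : α) :
    permCoboundary g (η * θ) i = permCoboundary g η (θ i) + permCoboundary g θ i :=
  (sub_add_sub_cancel _ _ _).symm

theorem perm_fin_three_cases (π : Perm (Fin 3)) :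
    π = 1 ∨ π = swap 0 1 * swap 1 2 ∨ π = swap 1 2 * swap 0 1 ∨
      π = swap 0 1 ∨ π = swap 0 2 ∨ π = swap 1 2 := by
  revert π
  decide

/-- The map `s : S₃ → (ℤ/4ℤ)³` defined by the six prescribed values is a 1-cocycle
for the right permutation action of `S₃` on `(ℤ/4ℤ)³`:
`s(η∘θ)(i) = s(η)(θ(i)) + s(θ)(i)` for all `η, θ` and all `i`.
Here multiplication of permutations is composition applying the right factor first,
`(η * θ) i = η (θ i)`, the cycle `(0 1 2)` is `Equiv.swap 0 1 * Equiv.swap 1 2`,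
and `(0 2 1)` is `Equiv.swap 1 2 * Equiv.swap 0 1`. -/
theorem stmt0 (s : Equiv.Perm (Fin 3) → Fin 3 → ZMod 4)
    (h_id : s 1 = ![0, 0, 0])
    (h_012 : s (Equiv.swap 0 1 * Equiv.swap 1 2) = ![3, 3, 2])
    (h_021 : s (Equiv.swap 1 2 * Equiv.swap 0 1) = ![2, 1, 1])
    (h_01 : s (Equiv.swap 0 1) = ![3, 1, 0])
    (h_02 : s (Equiv.swap 0 2) = ![2, 0, 2])
    (h_12 : s (Equiv.swap 1 2) = ![0, 3, 1]) :
    ∀ η θ : Equiv.Perm (Fin 3), ∀ i : Fin 3,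
      s (η * θ) i = s η (θ i) + s θ i := by
  have hs : s = permCoboundary fun i : Fin 3 => -((i : ℕ) : ZMod 4) := by
    funext π
    rcases perm_fin_three_cases π with rfl | rfl | rfl | rfl | rfl | rfl <;>
      simp only [h_id, h_012, h_021, h_01, h_02, h_12] <;> decide
  subst hs
  exact permCoboundary_mul _
end

section
/- Let E and V be finite sets and let src, tgt : E → V be the tail and head maps of a finite directed multigraph in which every vertex has exactly two outgoing and exactly two incoming edges, i.e. for every v ∈ V the sets {e ∈ E : src e = v} and {e ∈ E : tgt e = v} each have cardinality 2. Then there exists a labeling f : E → {o, u} (equivalently f : E → Bool) such that for every vertex v, the two edges with tail v receive distinct labels and the two edges with head v receive distinct labels; equivalently, the edge set decomposes into two spanning subgraphs each having exactly one outgoing and one incoming edge at every vertex. -/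
/-!
Pairing each edge with the other edge of the same tail gives a fixed-point-free involution `s`
of `E`, and heads give another one, `t`; the required labeling is a colouring flipped by both.
The orbits of `t * s` are the alternating cycles, and `s` permutes them without fixing any,
because every `s * (t * s) ^ k` is conjugate to `s` or to `t`. Colouring one orbit of each
`s`-swapped pair `true` and the other `false` works.
-/

open Finset Function

theorem Function.Involutive.exists_bool_ne {α : Type*} {σ : α → α} (hσ : Involutive σ)
    (hfix : ∀ x, σ x ≠ x) : ∃ g : α → Bool, ∀ x, g (σ x) ≠ g x := by
  let ι := embeddingToCardinal (α := α)
  refine ⟨fun x => decide (ι x < ι (σ x)), fun x => ?_⟩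
  have hne : ι (σ x) ≠ ι x := ι.injective.ne (hfix x)
  rcases hne.lt_or_gt with h | h <;> simp [hσ x, h, h.not_gt]

namespace Equiv.Perm

variable {α : Type*} {s t : Perm α}

theorem mul_zpow_eq_zpow_neg_mul (hs : s * s = 1) (ht : t * t = 1) (k : ℤ) :
    s * (t * s) ^ k = (t * s) ^ (-k) * s := by
  have hs_inv : s⁻¹ = s := inv_eq_of_mul_eq_one_right hs
  have hconj : s * (t * s) * s⁻¹ = (t * s)⁻¹ := by
    rw [hs_inv, mul_inv_rev, hs_inv, inv_eq_of_mul_eq_one_right ht, mul_assoc, mul_assoc, hs,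
      mul_one]
  calc s * (t * s) ^ k = (s * (t * s) * s⁻¹) ^ k * s := by
        rw [conj_zpow, inv_mul_cancel_right]
    _ = (t * s) ^ (-k) * s := by rw [hconj, inv_zpow']

theorem not_sameCycle_mul_self_apply (hs : s * s = 1) (ht : t * t = 1)
    (hs_fix : ∀ x, s x ≠ x) (ht_fix : ∀ x, t x ≠ x) (x : α) :
    ¬ (t * s).SameCycle x (s x) := by
  rintro ⟨k, hk⟩
  have hss : ∀ y, s (s y) = y := fun y => by rw [← mul_apply, hs, one_apply]
  set π := t * s
  have hfix : s ((π ^ k) x) = x := by rw [hk, hss]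
  have hsπ : ∀ m : ℤ, s * π ^ m = π ^ (-m) * s := mul_zpow_eq_zpow_neg_mul hs ht
  have hcancel : ∀ (m : ℤ) (y : α), (π ^ (-m)) y = x → y = (π ^ m) x := fun m y h => by
    rw [← h, ← mul_apply, ← zpow_add, add_neg_cancel, zpow_zero, one_apply]
  -- `s * π ^ (2m) = π ^ (-m) * s * π ^ m` and `s * π ^ (2m+1) = π ^ (-m) * (s * t * s) * π ^ m`
  obtain ⟨m, rfl | rfl⟩ := Int.even_or_odd' k
  · have h : (π ^ (-m)) (s ((π ^ m) x)) = x := by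
      rw [← mul_apply, ← hsπ, mul_apply, ← mul_apply (π ^ m), ← zpow_add, ← two_mul, hfix]
    exact hs_fix _ (hcancel m _ h)
  · have h : (π ^ (-m)) (s (t (s ((π ^ m) x)))) = x := by
      rw [← mul_apply, ← hsπ, mul_apply]
      convert hfix using 2
      rw [show 2 * m + 1 = m + 1 + m by ring, zpow_add, zpow_add, zpow_one]
      rfl
    exact ht_fix _ (by simpa only [hss] using congrArg s (hcancel m _ h))

theorem SameCycle.apply_of_mul_self (hs : s * s = 1) (ht : t * t = 1) {x y : α}
    (h : (t * s).SameCycle x y) : (t * s).SameCycle (s x) (s y) := by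
  obtain ⟨k, hk⟩ := h
  exact ⟨-k, by rw [← mul_apply, ← mul_zpow_eq_zpow_neg_mul hs ht, mul_apply, hk]⟩

theorem exists_bool_ne_of_mul_self (hs : s * s = 1) (ht : t * t = 1)
    (hs_fix : ∀ x, s x ≠ x) (ht_fix : ∀ x, t x ≠ x) :
    ∃ f : α → Bool, (∀ x, f (s x) ≠ f x) ∧ ∀ x, f (t x) ≠ f x := by
  let r := SameCycle.setoid (t * s)
  let σ : Quotient r → Quotient r := Quotient.map s fun _ _ => SameCycle.apply_of_mul_self hs ht
  have hσ : Involutive σ := by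
    refine Quotient.ind fun x => ?_
    simp only [σ, Quotient.map_mk, ← mul_apply, hs, one_apply]
  have hσ_fix : ∀ q, σ q ≠ q := Quotient.ind fun x h =>
    not_sameCycle_mul_self_apply hs ht hs_fix ht_fix x (Quotient.exact h).symm
  obtain ⟨g, hg⟩ := hσ.exists_bool_ne hσ_fix
  refine ⟨fun x => g ⟦x⟧, fun x => hg ⟦x⟧, fun x => ?_⟩
  have hst : (⟦s x⟧ : Quotient r) = ⟦t x⟧ :=
    Quotient.sound ⟨1, by rw [zpow_one, mul_apply, ← mul_apply s, hs, one_apply]⟩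
  show g ⟦t x⟧ ≠ g ⟦x⟧
  rw [← hst]
  exact hg ⟦x⟧

end Equiv.Perm

theorem exists_involution_of_card_fiber_eq_two {E V : Type*} [Fintype E] [DecidableEq V]
    (p : E → V) (hp : ∀ v, #{e | p e = v} = 2) :
    ∃ σ : Equiv.Perm E, σ * σ = 1 ∧ (∀ e, σ e ≠ e) ∧ ∀ e e', e ≠ e' → p e = p e' → σ e = e' := by
  classical
  have hcard : ∀ e, #(({e' | p e' = p e} : Finset E).erase e) = 1 := fun e => by
    rw [card_erase_of_mem (by simp), hp]
  choose σ hσ using fun e => card_eq_one.mp (hcard e)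
  have hσ_iff : ∀ e e', e' = σ e ↔ e' ≠ e ∧ p e' = p e := fun e e' => by
    rw [← mem_singleton, ← hσ e, mem_erase, mem_filter, and_iff_right (mem_univ _)]
  have hσ_ne : ∀ e, σ e ≠ e ∧ p (σ e) = p e := fun e => (hσ_iff e (σ e)).1 rfl
  have hσ_invol : Involutive σ := fun e =>
    ((hσ_iff (σ e) e).2 ⟨(hσ_ne e).1.symm, (hσ_ne e).2.symm⟩).symm
  refine ⟨hσ_invol.toPerm, Equiv.ext hσ_invol, fun e => (hσ_ne e).1,
    fun e e' hne h => ((hσ_iff e e').2 ⟨hne.symm, h.symm⟩).symm⟩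

theorem stmt6_general {E V : Type*} [Fintype E] [DecidableEq V]
    (src tgt : E → V)
    (hsrc : ∀ v : V, (Finset.univ.filter (fun e : E => src e = v)).card = 2)
    (htgt : ∀ v : V, (Finset.univ.filter (fun e : E => tgt e = v)).card = 2) :
    ∃ f : E → Bool,
      (∀ e e' : E, e ≠ e' → src e = src e' → f e ≠ f e') ∧
      (∀ e e' : E, e ≠ e' → tgt e = tgt e' → f e ≠ f e') := by
  obtain ⟨s, hs, hs_fix, hs_pair⟩ := exists_involution_of_card_fiber_eq_two src hsrc
  obtain ⟨t, ht, ht_fix, ht_pair⟩ := exists_involution_of_card_fiber_eq_two tgt htgt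
  obtain ⟨f, hfs, hft⟩ := Equiv.Perm.exists_bool_ne_of_mul_self hs ht hs_fix ht_fix
  refine ⟨f, fun e e' hne h => ?_, fun e e' hne h => ?_⟩
  · rw [← hs_pair e e' hne h]
    exact (hfs e).symm
  · rw [← ht_pair e e' hne h]
    exact (hft e).symm

/-- Let `src, tgt : E → V` be the tail and head maps of a finite directed
multigraph in which every vertex has exactly two outgoing and two incoming
edges.  Then there is a labeling `f : E → Bool` such that for every vertex the
two edges with that tail receive distinct labels and the two edges with that
head receive distinct labels. -/
theorem stmt6 {E V : Type*} [Fintype E] [Fintype V] [DecidableEq V]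
    (src tgt : E → V)
    (hsrc : ∀ v : V, (Finset.univ.filter (fun e : E => src e = v)).card = 2)
    (htgt : ∀ v : V, (Finset.univ.filter (fun e : E => tgt e = v)).card = 2) :
    ∃ f : E → Bool,
      (∀ e e' : E, e ≠ e' → src e = src e' → f e ≠ f e') ∧
      (∀ e e' : E, e ≠ e' → tgt e = tgt e' → f e ≠ f e') :=
  stmt6_general src tgt hsrc htgt
end
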